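/- Let θ : Fin n₁ → ℝ satisfy, for every i < n₁, θ i = |C_i| − Σ_{j ∈ C_i, j < n₁} (1 + θ j)⁻¹ and θ i > 0, and let G' be the Generation Matrix of the 1-order subtree T⁽¹⁾ with node weights w' i = √(1 + θ i) and edge weights u' i = 1/√(1 + θ i) for i ≠ 0. Then M_Tᵀ · M_T is invertible and for every x : Fin n₁ → ℝ, (M_Tᵀ · M_T)⁻¹ · x = G'⁻¹ · ((G'ᵀ)⁻¹ · x); equivalently, (M_Tᵀ · M_T)⁻¹ = G'⁻¹ · (G'ᵀ)⁻¹, so applying (M_Tᵀ · M_T)⁻¹ amounts to an upward propagation followed by a downward propagation with respect to G'. -/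

import Mathlib

/-!
Write `P` for the parent incidence matrix of the tree (`P i (f i) = 1` for `i ≠ 0`). Then
`M_T` is `1 - P` with the leaf columns removed and `G' = diag w' - diag u' · P'`, where `P'` is
the part of `P` on the non-leaf nodes. Since `w' u' = 1`, both Gram matrices `M_Tᵀ M_T` and
`G'ᵀ G'` equal `-P' - P'ᵀ` plus a diagonal, and the diagonals agree exactly by the recursion
defining `θ`: `w'ᵢ² + ∑_{j ∈ C_i, j < n₁} u'ⱼ² = 1 + θ i + ∑ (1 + θ j)⁻¹ = 1 + |C_i|`.
So `M_Tᵀ M_T = G'ᵀ G'`, and `G'` is lower triangular with positive diagonal.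
-/

open Matrix Finset

variable {ι κ R : Type*}

variable (R) in
def parentMatrix [Zero R] [One R] [DecidableEq κ] (r : ι → Prop) [DecidablePred r]
    (p : ι → κ) : Matrix ι κ R :=
  of fun i j => if r i ∧ p i = j then 1 else 0

theorem parentMatrix_transpose_mul_diagonal_mul [Fintype ι] [DecidableEq ι] [DecidableEq κ]
    [NonAssocSemiring R] (r : ι → Prop) [DecidablePred r] (p : ι → κ) (d : ι → R) :
    (parentMatrix R r p)ᵀ * diagonal d * parentMatrix R r p =
      diagonal fun j => ∑ i with r i ∧ p i = j, d i := by
  ext a b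
  rw [mul_apply, diagonal_apply, sum_filter]
  split_ifs with hab
  · subst hab
    refine sum_congr rfl fun i _ => ?_
    simp only [mul_diagonal, transpose_apply, parentMatrix, of_apply]
    split_ifs <;> simp
  · refine sum_eq_zero fun i _ => ?_
    simp only [mul_diagonal, transpose_apply, parentMatrix, of_apply]
    split_ifs with hia hib <;> simp_all

theorem Matrix.submatrix_transpose_mul_mul {m n l : Type*} [Fintype m]
    [NonUnitalNonAssocSemiring R]
    (A : Matrix m n R) (D : Matrix m m R) (e : l → n) :
    (Aᵀ * D * A).submatrix e e = (A.submatrix id e)ᵀ * D * A.submatrix id e := by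
  rw [submatrix_mul _ _ _ id _ Function.bijective_id,
    submatrix_mul _ _ _ id _ Function.bijective_id]
  rfl

def generationMatrix [Ring R] [Fintype ι] [DecidableEq ι] (P : Matrix ι ι R) (w u : ι → R) :
    Matrix ι ι R :=
  diagonal w - diagonal u * P

theorem generationMatrix_transpose_mul_self [CommRing R] [Fintype ι] [DecidableEq ι]
    (P : Matrix ι ι R) {w u : ι → R} (hwu : ∀ i, w i * u i = 1) :
    (generationMatrix P w u)ᵀ * generationMatrix P w u =
      diagonal (w * w) - P - Pᵀ + Pᵀ * diagonal (u * u) * P := by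
  have hsq : ∀ d : ι → R, diagonal (d * d) = diagonal d * diagonal d := fun d =>
    (diagonal_mul_diagonal d d).symm
  have hwu' : diagonal w * diagonal u = 1 := by
    rw [diagonal_mul_diagonal, ← diagonal_one]
    exact congrArg diagonal (funext hwu)
  have huw : diagonal u * diagonal w = 1 := by
    rw [diagonal_mul_diagonal, ← diagonal_one]
    exact congrArg diagonal (funext fun i => by rw [mul_comm, hwu])
  simp only [generationMatrix, transpose_sub, transpose_mul, diagonal_transpose, sub_mul, mul_sub,
    hsq, Matrix.mul_assoc, huw, ← Matrix.mul_assoc (diagonal w), hwu', Matrix.one_mul,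
    Matrix.mul_one]
  abel

theorem det_generationMatrix [CommRing R] [Fintype ι] [DecidableEq ι] [LinearOrder ι]
    {P : Matrix ι ι R} (hP : ∀ i j, i ≤ j → P i j = 0) (w u : ι → R) :
    (generationMatrix P w u).det = ∏ i, w i := by
  have hlower : (generationMatrix P w u).IsLowerTriangular :=
    (blockTriangular_diagonal w).sub
      ((blockTriangular_diagonal u).mul fun i j hij => hP i j (le_of_lt hij))
  rw [det_of_isLowerTriangular _ hlower]
  refine prod_congr rfl fun i _ => ?_
  simp [generationMatrix, hP i i le_rfl]

section Gram

variable [CommRing R] [DecidableEq ι] [DecidableEq κ]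
  (r : ι → Prop) [DecidablePred r] (p : ι → ι) {e : κ → ι}

theorem one_sub_parentMatrix_submatrix_transpose_mul_self [Fintype ι] (he : Function.Injective e) :
    ((1 - parentMatrix R r p).submatrix id e)ᵀ * (1 - parentMatrix R r p).submatrix id e =
      1 + diagonal (fun b => (#{i | r i ∧ p i = e b} : R)) -
        (parentMatrix R r p).submatrix e e - ((parentMatrix R r p).submatrix e e)ᵀ := by
  set P := parentMatrix R r p
  have hgram : (1 - P)ᵀ * 1 * (1 - P) = 1 - P - Pᵀ + Pᵀ * diagonal (fun _ => 1) * P := by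
    simp only [diagonal_one, transpose_sub, transpose_one, Matrix.mul_one, sub_mul, mul_sub,
      Matrix.one_mul]
    abel
  rw [← Matrix.mul_one ((1 - P).submatrix id e)ᵀ, ← submatrix_transpose_mul_mul, hgram,
    parentMatrix_transpose_mul_diagonal_mul]
  simp only [submatrix_add, submatrix_sub, Pi.add_apply, Pi.sub_apply, submatrix_one _ he,
    submatrix_diagonal _ _ he, transpose_submatrix, Function.comp_def, sum_const, nsmul_eq_mul,
    mul_one]
  abel

theorem generationMatrix_parentMatrix_submatrix_transpose_mul_self [Fintype κ]
    (he : Function.Injective e) {w u : κ → R} (hwu : ∀ a, w a * u a = 1) :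
    (generationMatrix ((parentMatrix R r p).submatrix e e) w u)ᵀ *
        generationMatrix ((parentMatrix R r p).submatrix e e) w u =
      diagonal (w * w) + diagonal (fun b => ∑ a with r (e a) ∧ p (e a) = e b, u a * u a) -
        (parentMatrix R r p).submatrix e e - ((parentMatrix R r p).submatrix e e)ᵀ := by
  have hchildren : ((parentMatrix R r p).submatrix e e)ᵀ * diagonal (u * u) *
      (parentMatrix R r p).submatrix e e =
      diagonal (fun b => ∑ a with r (e a) ∧ p (e a) = e b, u a * u a) := by
    rw [show (parentMatrix R r p).submatrix e e =
        (parentMatrix R (r ∘ e) (p ∘ e)).submatrix id e from rfl,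
      ← submatrix_transpose_mul_mul, parentMatrix_transpose_mul_diagonal_mul,
      submatrix_diagonal _ _ he]
    rfl
  rw [generationMatrix_transpose_mul_self _ hwu, hchildren]
  abel

end Gram

section Tree

variable {n m : ℕ} [NeZero n] (f : Fin n → Fin n) (h : m ≤ n)

theorem eq_one_sub_parentMatrix_submatrix [Ring R] (hf : ∀ i : Fin n, i ≠ 0 → f i ≠ i)
    {M : Matrix (Fin n) (Fin m) R}
    (hM : ∀ i j, M i j = if (i : ℕ) = (j : ℕ) then 1
      else if i ≠ 0 ∧ (j : ℕ) = (f i : ℕ) then -1 else 0) :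
    M = (1 - parentMatrix R (· ≠ 0) f).submatrix id (Fin.castLE h) := by
  ext i j
  have hfi : i ≠ 0 → (f i : ℕ) ≠ i := fun hi => Fin.val_ne_of_ne (hf i hi)
  rw [hM]
  simp only [submatrix_apply, Matrix.sub_apply, one_apply, parentMatrix, of_apply, id,
    Fin.ext_iff, Fin.val_castLE]
  split_ifs <;> first | (exfalso; omega) | simp

theorem eq_generationMatrix_parentMatrix_submatrix [Ring R] (hf : ∀ i : Fin n, i ≠ 0 → f i ≠ i)
    {G : Matrix (Fin m) (Fin m) R} (w u : Fin m → R)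
    (hG : ∀ a b, G a b = if a = b then w a
      else if (a : ℕ) ≠ 0 ∧ (b : ℕ) = (f (Fin.castLE h a) : ℕ) then -u a else 0) :
    G = generationMatrix ((parentMatrix R (· ≠ 0) f).submatrix (Fin.castLE h) (Fin.castLE h))
      w u := by
  ext a b
  have hfa : (a : ℕ) ≠ 0 → (f (Fin.castLE h a) : ℕ) ≠ a := fun ha =>
    Fin.val_ne_of_ne (hf _ (by simpa [Fin.ext_iff] using ha))
  rw [hG]
  simp only [generationMatrix, Matrix.sub_apply, diagonal_apply, diagonal_mul, submatrix_apply,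
    parentMatrix, of_apply, ne_eq, Fin.ext_iff, Fin.val_castLE, Fin.val_zero]
  split_ifs <;> first | (exfalso; omega) | simp

theorem parentMatrix_submatrix_castLE_eq_zero_of_le [Zero R] [One R]
    (hf : ∀ i : Fin n, i ≠ 0 → f i < i) {a b : Fin m} (hab : a ≤ b) :
    (parentMatrix R (· ≠ 0) f).submatrix (Fin.castLE h) (Fin.castLE h) a b = 0 := by
  simp only [submatrix_apply, parentMatrix, of_apply]
  rw [if_neg]
  rintro ⟨ha, hfa⟩
  have := hf _ ha
  rw [hfa, Fin.lt_def] at this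
  simp only [Fin.val_castLE] at this
  omega

end Tree

theorem gmc_inverse_via_propagations_general (n n₁ : ℕ) [NeZero n]
    (f : Fin n → Fin n) (hf : ∀ i : Fin n, i ≠ 0 → f i < i)
    (hn₁n : n₁ < n)
    (M : Matrix (Fin n) (Fin n₁) ℝ)
    (hM : ∀ (i : Fin n) (j : Fin n₁), M i j =
      if (i : ℕ) = (j : ℕ) then 1
      else if i ≠ 0 ∧ (j : ℕ) = (f i : ℕ) then -1 else 0)
    (θ : Fin n₁ → ℝ)
    (hθ : ∀ i : Fin n₁, θ i =
      ((Finset.univ.filter fun j : Fin n =>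
        j ≠ 0 ∧ f j = Fin.castLE hn₁n.le i).card : ℝ) -
      ∑ j : Fin n₁,
        (if Fin.castLE hn₁n.le j ≠ 0 ∧
            f (Fin.castLE hn₁n.le j) = Fin.castLE hn₁n.le i
         then (1 + θ j)⁻¹ else 0))
    (hθpos : ∀ i : Fin n₁, 0 < θ i)
    (G' : Matrix (Fin n₁) (Fin n₁) ℝ)
    (hG' : ∀ a b : Fin n₁, G' a b =
      if a = b then Real.sqrt (1 + θ a)
      else if (a : ℕ) ≠ 0 ∧ (b : ℕ) = (f (Fin.castLE hn₁n.le a) : ℕ)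
        then -(1 / Real.sqrt (1 + θ a))
      else 0) :
    IsUnit (Mᵀ * M).det ∧
    (∀ x : Fin n₁ → ℝ,
      (Mᵀ * M)⁻¹.mulVec x = G'⁻¹.mulVec ((G'ᵀ)⁻¹.mulVec x)) ∧
    (Mᵀ * M)⁻¹ = G'⁻¹ * (G'ᵀ)⁻¹ := by
  have hf_ne : ∀ i : Fin n, i ≠ 0 → f i ≠ i := fun i hi => (hf i hi).ne
  have h1θ : ∀ a, 0 < 1 + θ a := fun a => by linarith [hθpos a]
  have hsqrt : ∀ a, 0 < √(1 + θ a) := fun a => Real.sqrt_pos.2 (h1θ a)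
  have hsq : ∀ a, √(1 + θ a) * √(1 + θ a) = 1 + θ a := fun a => Real.mul_self_sqrt (h1θ a).le
  have he := Fin.castLE_injective hn₁n.le
  have hG'eq :=
    eq_generationMatrix_parentMatrix_submatrix f hn₁n.le hf_ne _ (fun a => 1 / √(1 + θ a)) hG'
  have hgram : Mᵀ * M = G'ᵀ * G' := by
    rw [eq_one_sub_parentMatrix_submatrix f hn₁n.le hf_ne hM, hG'eq,
      one_sub_parentMatrix_submatrix_transpose_mul_self _ _ he,
      generationMatrix_parentMatrix_submatrix_transpose_mul_self _ _ he
        fun a => mul_one_div_cancel (hsqrt a).ne']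
    congr 2
    rw [← diagonal_one, diagonal_add, diagonal_add]
    refine congrArg diagonal (funext fun b => ?_)
    simp only [Pi.mul_apply, hsq, one_div, ← mul_inv, sum_filter]
    linarith [hθ b]
  have hdet : IsUnit G'.det := by
    rw [hG'eq,
      det_generationMatrix fun a b => parentMatrix_submatrix_castLE_eq_zero_of_le f hn₁n.le hf]
    exact isUnit_iff_ne_zero.2 (prod_ne_zero_iff.2 fun a _ => (hsqrt a).ne')
  have hinv : (Mᵀ * M)⁻¹ = G'⁻¹ * (G'ᵀ)⁻¹ := by rw [hgram, Matrix.mul_inv_rev]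
  refine ⟨?_, fun x => by rw [hinv, mulVec_mulVec], hinv⟩
  rw [hgram, det_mul, det_transpose]
  exact hdet.mul hdet

/-- Applying `(M_Tᵀ ⬝ M_T)⁻¹` amounts to an upward propagation followed by a downward
propagation with respect to the inner-product-equivalent Generation Matrix `G'`:
`M_Tᵀ ⬝ M_T` is invertible, `(M_Tᵀ M_T)⁻¹ x = G'⁻¹ ((G'ᵀ)⁻¹ x)` for every `x`, and
`(M_Tᵀ M_T)⁻¹ = G'⁻¹ (G'ᵀ)⁻¹`. -/
theorem gmc_inverse_via_propagations (n n₁ : ℕ) [NeZero n]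
    (f : Fin n → Fin n) (hf0 : f 0 = 0) (hf : ∀ i : Fin n, i ≠ 0 → f i < i)
    (hn₁ : 1 ≤ n₁) (hn₁n : n₁ < n)
    (hleaf : ∀ i : Fin n, (∃ j : Fin n, j ≠ 0 ∧ f j = i) ↔ (i : ℕ) < n₁)
    (M : Matrix (Fin n) (Fin n₁) ℝ)
    (hM : ∀ (i : Fin n) (j : Fin n₁), M i j =
      if (i : ℕ) = (j : ℕ) then 1
      else if i ≠ 0 ∧ (j : ℕ) = (f i : ℕ) then -1 else 0)
    (θ : Fin n₁ → ℝ)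
    (hθ : ∀ i : Fin n₁, θ i =
      ((Finset.univ.filter fun j : Fin n =>
        j ≠ 0 ∧ f j = Fin.castLE hn₁n.le i).card : ℝ) -
      ∑ j : Fin n₁,
        (if Fin.castLE hn₁n.le j ≠ 0 ∧
            f (Fin.castLE hn₁n.le j) = Fin.castLE hn₁n.le i
         then (1 + θ j)⁻¹ else 0))
    (hθpos : ∀ i : Fin n₁, 0 < θ i)
    (G' : Matrix (Fin n₁) (Fin n₁) ℝ)
    (hG' : ∀ a b : Fin n₁, G' a b =
      if a = b then Real.sqrt (1 + θ a)
      else if (a : ℕ) ≠ 0 ∧ (b : ℕ) = (f (Fin.castLE hn₁n.le a) : ℕ)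
        then -(1 / Real.sqrt (1 + θ a))
      else 0) :
    IsUnit (Mᵀ * M).det ∧
    (∀ x : Fin n₁ → ℝ,
      (Mᵀ * M)⁻¹.mulVec x = G'⁻¹.mulVec ((G'ᵀ)⁻¹.mulVec x)) ∧
    (Mᵀ * M)⁻¹ = G'⁻¹ * (G'ᵀ)⁻¹ :=
  gmc_inverse_via_propagations_general n n₁ f hf hn₁n M hM θ hθ hθpos G' hG'
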